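/- arXiv:1803.11322 — 2 statements merged into one kernel-verified Lean document; each statement's English description precedes it below -/
import Mathlib

section
/- For a < b and t with t + a > 0, ∫_a^b log(x+t) / √((b-x)(x-a)) dx = 2π log((√(t+a) + √(t+b))/2). -/
/-!
The substitution `x = (a + b) / 2 + (b - a) / 2 * cos θ` turns the arcsine weight into `dθ` on
`[0, π]`. With `q = √(t + a)`, `p = √(t + b)`, `u = (q + p) / 2` and `v = (p - q) / 2` one gets
`x + t = u ^ 2 + v ^ 2 + 2 * u * v * cos θ = ‖u * exp (θ * I) + v‖ ^ 2`. Since `|v| ≤ u`, the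
average of `log ‖· + v‖` over the circle of radius `u` is `log u` (Jensen's formula), and the
symmetry `θ ↦ 2π - θ` halves the integral over the full circle.
-/

open Real intervalIntegral MeasureTheory

theorem integral_div_sqrt_one_sub_sq (f : ℝ → ℝ) :
    ∫ y in -1..1, f y / √(1 - y ^ 2) = ∫ θ in 0..π, f (cos θ) := by
  simp_rw [div_eq_mul_inv, ← sqrt_inv]
  exact (Polynomial.Chebyshev.integral_measureT f).symm.trans
    Polynomial.Chebyshev.integral_measureT_eq_integral_cos

theorem integral_div_sqrt_sub_mul_sub {a b : ℝ} (hab : a < b) (g : ℝ → ℝ) :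
    ∫ x in a..b, g x / √((b - x) * (x - a)) =
      ∫ θ in 0..π, g ((a + b) / 2 + (b - a) / 2 * cos θ) := by
  set m := (a + b) / 2
  set r := (b - a) / 2
  have hr : 0 < r := by simp only [r]; linarith
  have hsqrt (y : ℝ) : √((b - (m + r * y)) * (m + r * y - a)) = r * √(1 - y ^ 2) := by
    rw [show (b - (m + r * y)) * (m + r * y - a) = r ^ 2 * (1 - y ^ 2) by simp only [m, r]; ring,
      sqrt_mul (by positivity), sqrt_sq hr.le]
  have hsub := smul_integral_comp_add_mul (a := -1) (b := 1)
    (fun x => g x / √((b - x) * (x - a))) r m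
  rw [show m + r * -1 = a by simp only [m, r]; ring, show m + r * 1 = b by simp only [m, r]; ring]
    at hsub
  rw [← hsub, ← integral_div_sqrt_one_sub_sq (fun y => g (m + r * y)), smul_eq_mul,
    ← intervalIntegral.integral_const_mul]
  congr 1 with y
  rw [hsqrt]
  field_simp

theorem integral_comp_cos_zero_two_pi {E : Type*} [NormedAddCommGroup E] [NormedSpace ℝ E]
    {f : ℝ → E} (hf : IntervalIntegrable (fun θ => f (cos θ)) volume 0 π) :
    ∫ θ in 0..2 * π, f (cos θ) = 2 • ∫ θ in 0..π, f (cos θ) := by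
  have hreflect : ∫ θ in π..2 * π, f (cos θ) = ∫ θ in 0..π, f (cos θ) := by
    have h := integral_comp_sub_left (fun θ => f (cos θ)) (2 * π) (a := 0) (b := π)
    simp only [cos_two_pi_sub, sub_zero, show 2 * π - π = π by ring] at h
    exact h.symm
  have hf' : IntervalIntegrable (fun θ => f (cos θ)) volume π (2 * π) := by
    simpa [cos_two_pi_sub, show 2 * π - π = π by ring] using (hf.comp_sub_left (2 * π)).symm
  rw [← integral_add_adjacent_intervals hf hf', hreflect, two_nsmul]

theorem norm_circleMap_zero_add_sq (u v θ : ℝ) :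
    ‖circleMap 0 u θ + v‖ ^ 2 = u ^ 2 + v ^ 2 + 2 * u * v * cos θ := by
  rw [Complex.sq_norm, Complex.normSq_apply]
  simp only [circleMap, zero_add, Complex.add_re, Complex.add_im, Complex.mul_re, Complex.mul_im,
    Complex.ofReal_re, Complex.ofReal_im, Complex.exp_ofReal_mul_I_re,
    Complex.exp_ofReal_mul_I_im]
  linear_combination u ^ 2 * sin_sq_add_cos_sq θ

theorem log_sq_add_sq_add_two_mul_mul_cos_eq (u v : ℝ) :
    (fun θ => log (u ^ 2 + v ^ 2 + 2 * u * v * cos θ)) =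
      fun θ => 2 * log ‖circleMap 0 u θ - (-v : ℂ)‖ := by
  ext θ
  rw [sub_neg_eq_add, ← norm_circleMap_zero_add_sq, log_pow, Nat.cast_ofNat]

theorem intervalIntegrable_log_sq_add_sq_add_two_mul_mul_cos (u v : ℝ) :
    IntervalIntegrable (fun θ => log (u ^ 2 + v ^ 2 + 2 * u * v * cos θ)) volume 0 (2 * π) := by
  rw [log_sq_add_sq_add_two_mul_mul_cos_eq]
  exact (circleIntegrable_log_norm_sub_const u).const_mul 2

theorem integral_log_sq_add_sq_add_two_mul_mul_cos_two_pi {u v : ℝ} (h : |v| ≤ u) :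
    ∫ θ in 0..2 * π, log (u ^ 2 + v ^ 2 + 2 * u * v * cos θ) = 4 * π * log u := by
  have hmean : circleAverage (log ‖· - (-v : ℂ)‖) 0 u = log u :=
    circleAverage_log_norm_sub_const_of_mem_closedBall (by
      simpa [abs_of_nonneg ((abs_nonneg v).trans h)] using h)
  rw [circleAverage_def, smul_eq_mul, inv_mul_eq_iff_eq_mul₀ (by positivity)] at hmean
  rw [log_sq_add_sq_add_two_mul_mul_cos_eq, intervalIntegral.integral_const_mul, hmean]
  ring

theorem integral_log_sq_add_sq_add_two_mul_mul_cos_pi {u v : ℝ} (h : |v| ≤ u) :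
    ∫ θ in 0..π, log (u ^ 2 + v ^ 2 + 2 * u * v * cos θ) = 2 * π * log u := by
  have hint := (intervalIntegrable_log_sq_add_sq_add_two_mul_mul_cos u v).mono_set
    (Set.uIcc_subset_uIcc Set.left_mem_uIcc (Set.mem_uIcc_of_le pi_pos.le (by linarith [pi_pos])))
  have h2 := integral_comp_cos_zero_two_pi (f := fun y => log (u ^ 2 + v ^ 2 + 2 * u * v * y)) hint
  rw [integral_log_sq_add_sq_add_two_mul_mul_cos_two_pi h, nsmul_eq_mul, Nat.cast_ofNat] at h2
  linarith

/-- `∫_a^b log(x+t) / √((b-x)(x-a)) dx = 2π log((√(t+a) + √(t+b))/2)` for `a < b`, `t+a > 0`. -/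
theorem stmt8 (a b t : ℝ) (hab : a < b) (ht : 0 < t + a) :
    ∫ x in a..b, Real.log (x + t) / Real.sqrt ((b - x) * (x - a)) =
      2 * Real.pi * Real.log ((Real.sqrt (t + a) + Real.sqrt (t + b)) / 2) := by
  set q := √(t + a)
  set p := √(t + b)
  have hq : q ^ 2 = t + a := sq_sqrt ht.le
  have hp : p ^ 2 = t + b := sq_sqrt (by linarith)
  have hv : |(p - q) / 2| ≤ (q + p) / 2 := by
    rw [abs_le]; constructor <;> linarith [sqrt_nonneg (t + a), sqrt_nonneg (t + b)]
  rw [integral_div_sqrt_sub_mul_sub hab, ← integral_log_sq_add_sq_add_two_mul_mul_cos_pi hv]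
  congr 1 with θ
  congr 1
  linear_combination (-(1 + cos θ) / 2) * hp - (1 - cos θ) / 2 * hq
end

section
/- For |z| < 1 with z in the cut plane, ₂F₁(1, 1/2; 5/2; z) = (3/4)·((z-1)/z^{3/2})·log((1+√z)/(1-√z)) + 3/(2z). -/
/-! With `z = t²`, the coefficient of `z^k` is `3 / ((2k+1)(2k+3)) = (3/2)(1/(2k+1) - 1/(2k+3))`,
and both `Σ t^(2k+1)/(2k+1)` and `Σ t^(2k+3)/(2k+3)` are read off the Taylor series
`log (1+t) - log (1-t) = 2 Σ t^(2k+1)/(2k+1)`. -/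

/-- The Gauss hypergeometric series `₂F₁(a,b;c;x) = Σ_k (a)_k (b)_k / ((c)_k k!) x^k`. -/
noncomputable def twoF1 (a b c x : ℝ) : ℝ :=
  ∑' k : ℕ, ((ascPochhammer ℝ k).eval a * (ascPochhammer ℝ k).eval b) /
    ((ascPochhammer ℝ k).eval c * (Nat.factorial k : ℝ)) * x ^ k

open Real

lemma ascPochhammer_eval_five_halves (k : ℕ) :
    (ascPochhammer ℝ k).eval (5 / 2) =
      (ascPochhammer ℝ k).eval (1 / 2) * ((2 * k + 1) * (2 * k + 3) / 3) := by
  induction k with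
  | zero => simp
  | succ n ih =>
    rw [ascPochhammer_succ_eval, ascPochhammer_succ_eval, ih]
    push_cast
    ring

lemma twoF1_coeff_one_one_half_five_halves (k : ℕ) :
    ((ascPochhammer ℝ k).eval 1 * (ascPochhammer ℝ k).eval (1 / 2)) /
        ((ascPochhammer ℝ k).eval (5 / 2) * (Nat.factorial k : ℝ)) =
      3 / ((2 * k + 1) * (2 * k + 3)) := by
  have hp : 0 < (ascPochhammer ℝ k).eval (1 / 2 : ℝ) := ascPochhammer_pos k _ (by norm_num)
  rw [ascPochhammer_eval_one, ascPochhammer_eval_five_halves]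
  field_simp

section OddPowerSeries

variable {t : ℝ} (ht : |t| < 1) (ht0 : t ≠ 0)
include ht ht0

lemma hasSum_sq_pow_div_two_mul_add_one :
    HasSum (fun k : ℕ => (t ^ 2) ^ k / (2 * k + 1)) ((log (1 + t) - log (1 - t)) / (2 * t)) := by
  refine ((hasSum_log_sub_log_of_abs_lt_one ht).div_const (2 * t)).congr_fun fun k => ?_
  rw [show t ^ (2 * k + 1) = (t ^ 2) ^ k * t by ring]
  field_simp

lemma hasSum_sq_pow_div_two_mul_add_three :
    HasSum (fun k : ℕ => (t ^ 2) ^ k / (2 * k + 3))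
      ((log (1 + t) - log (1 - t) - 2 * t) / (2 * t ^ 3)) := by
  have hshift : HasSum (fun k : ℕ => 2 * (1 / (2 * ((k + 1 : ℕ) : ℝ) + 1)) * t ^ (2 * (k + 1) + 1))
      (log (1 + t) - log (1 - t) - 2 * t) := by
    simpa using (hasSum_nat_add_iff' 1).mpr (hasSum_log_sub_log_of_abs_lt_one ht)
  refine (hshift.div_const (2 * t ^ 3)).congr_fun fun k => ?_
  have h3 : (2 : ℝ) * k + 3 ≠ 0 := by positivity
  rw [show 2 * (k + 1) + 1 = 2 * k + 3 by ring, pow_add, pow_mul]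
  push_cast
  field_simp
  ring

lemma hasSum_three_div_mul_sq_pow :
    HasSum (fun k : ℕ => 3 / ((2 * k + 1) * (2 * k + 3)) * (t ^ 2) ^ k)
      (3 / 4 * ((t ^ 2 - 1) / t ^ 3) * (log (1 + t) - log (1 - t)) + 3 / (2 * t ^ 2)) := by
  have hvalue : 3 / 4 * ((t ^ 2 - 1) / t ^ 3) * (log (1 + t) - log (1 - t)) + 3 / (2 * t ^ 2) =
      3 / 2 * ((log (1 + t) - log (1 - t)) / (2 * t) -
        (log (1 + t) - log (1 - t) - 2 * t) / (2 * t ^ 3)) := by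
    field_simp
    ring
  rw [hvalue]
  refine (((hasSum_sq_pow_div_two_mul_add_one ht ht0).sub
    (hasSum_sq_pow_div_two_mul_add_three ht ht0)).mul_left (3 / 2)).congr_fun fun k => ?_
  have h1 : (2 : ℝ) * k + 1 ≠ 0 := by positivity
  have h3 : (2 : ℝ) * k + 3 ≠ 0 := by positivity
  field_simp
  ring

end OddPowerSeries

/-- For `0 < z < 1`,
`₂F₁(1,1/2;5/2;z) = (3/4)((z-1)/z^{3/2}) log((1+√z)/(1-√z)) + 3/(2z)`. -/
theorem stmt13 (z : ℝ) (hz0 : 0 < z) (hz1 : z < 1) :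
    twoF1 1 (1 / 2) (5 / 2) z =
      3 / 4 * ((z - 1) / z ^ ((3 : ℝ) / 2)) *
          Real.log ((1 + Real.sqrt z) / (1 - Real.sqrt z)) +
        3 / (2 * z) := by
  set t := √z with ht
  have ht0 : 0 < t := sqrt_pos.mpr hz0
  have ht1 : t < 1 := (sqrt_lt' one_pos).mpr (by linarith)
  have hz : z = t ^ 2 := (sq_sqrt hz0.le).symm
  have hz32 : z ^ ((3 : ℝ) / 2) = t ^ 3 := by
    rw [ht, sqrt_eq_rpow, ← rpow_natCast, ← rpow_mul hz0.le]
    norm_num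
  have hlog : log ((1 + t) / (1 - t)) = log (1 + t) - log (1 - t) :=
    log_div (by positivity) (by linarith)
  rw [twoF1, hz32, hlog]
  simp only [twoF1_coeff_one_one_half_five_halves]
  rw [hz]
  exact (hasSum_three_div_mul_sq_pow (by rwa [abs_of_pos ht0]) ht0.ne').tsum_eq
end
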